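/- Let f be a piecewise contracting interval map with D ⊂ X̃, let x ∈ X̃ and i ∈ {1,...,N-1}. If c_i is left-right recurrently visited by the orbit of x (i.e. c_i ∈ Δ_lr(x)), then c_i, d_i^+ and d_i^- belong to ω(x), and moreover the closures of the orbits of d_i^- and d_i^+ are contained in ω(x). -/

import Mathlib

open Filter Topology Set

/-- A piecewise contracting interval map on `X = [c 0, c N]` with contraction pieces
`X_i` delimited by the points `c 0 < c 1 < … < c N`, contraction rate `lam ∈ (0,1)`,
and `fe i` the (unique) continuous `lam`-Lipschitz extension of `f` restricted to the
`i`-th piece to its closure `[c (i-1), c i]`. The pieces are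
`X_1 = [c 0, c 1)`, `X_i = (c (i-1), c i)` for `1 < i < N`, `X_N = (c (N-1), c N]`. -/
structure PCIM where
  N : ℕ
  hN : 2 ≤ N
  c : ℕ → ℝ
  lam : ℝ
  f : ℝ → ℝ
  fe : ℕ → ℝ → ℝ
  hc : StrictMonoOn c (Set.Iic N)
  hlam : lam ∈ Set.Ioo (0 : ℝ) 1
  hmap : Set.MapsTo f (Set.Icc (c 0) (c N)) (Set.Icc (c 0) (c N))
  hfe_lip : ∀ i, 1 ≤ i → i ≤ N →
    ∀ x ∈ Set.Icc (c (i - 1)) (c i), ∀ y ∈ Set.Icc (c (i - 1)) (c i),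
      |fe i x - fe i y| ≤ lam * |x - y|
  hfe_eq : ∀ i, 1 ≤ i → i ≤ N → ∀ x ∈ Set.Ioo (c (i - 1)) (c i), fe i x = f x
  hfe_left : fe 1 (c 0) = f (c 0)
  hfe_right : fe N (c N) = f (c N)

namespace PCIM

variable (P : PCIM)

/-- The phase space `X = [c 0, c N]`. -/
def X : Set ℝ := Set.Icc (P.c 0) (P.c P.N)

/-- The `i`-th contraction piece (`1 ≤ i ≤ N`). -/
def piece (i : ℕ) : Set ℝ :=
  Set.Ioo (P.c (i - 1)) (P.c i)
    ∪ (if i = 1 then {P.c 0} else (∅ : Set ℝ))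
    ∪ (if i = P.N then {P.c P.N} else (∅ : Set ℝ))

/-- `Δ`, the set of interior boundary points of the pieces. -/
def Δ : Set ℝ := {y | ∃ i, 1 ≤ i ∧ i < P.N ∧ y = P.c i}

/-- `X̃ = ⋂ n, f⁻ⁿ(X \ Δ)`: points whose whole forward orbit stays in `X` and avoids `Δ`. -/
def Xt : Set ℝ := {x | ∀ n : ℕ, P.f^[n] x ∈ P.X \ P.Δ}

/-- Forward orbit of `x`. -/
def orbit (x : ℝ) : Set ℝ := Set.range fun n : ℕ => P.f^[n] x

/-- The ω-limit set of `x`: limits of subsequences of the forward orbit. -/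
def omega (x : ℝ) : Set ℝ :=
  {y | ∃ φ : ℕ → ℕ, StrictMono φ ∧
    Filter.Tendsto (fun n => P.f^[φ n] x) Filter.atTop (nhds y)}

/-- `d_i^- = f_i (c_i)`, the left lateral limit of `f` at `c i`. -/
def dminus (i : ℕ) : ℝ := P.fe i (P.c i)

/-- `d_i^+ = f_{i+1} (c_i)`, the right lateral limit of `f` at `c i`. -/
def dplus (i : ℕ) : ℝ := P.fe (i + 1) (P.c i)

/-- `D⁻ = {d_1^-, …, d_{N-1}^-}`. -/
def Dminus : Set ℝ := {y | ∃ i, 1 ≤ i ∧ i < P.N ∧ y = P.dminus i}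

/-- `D⁺ = {d_1^+, …, d_{N-1}^+}`. -/
def Dplus : Set ℝ := {y | ∃ i, 1 ≤ i ∧ i < P.N ∧ y = P.dplus i}

/-- `D`, the set of all one-sided limits of `f` at endpoints of the pieces. -/
def D : Set ℝ := P.Dminus ∪ P.Dplus ∪ {P.fe 1 (P.c 0), P.fe P.N (P.c P.N)}

/-- `A` is pseudo-invariant: for every `x ∈ A` at least one one-sided limit of `f`
at `x` (i.e. some `fe i x` with `x` in the closure of the `i`-th piece) belongs to `A`. -/
def PseudoInvariant (A : Set ℝ) : Prop :=
  ∀ x ∈ A, ∃ i, 1 ≤ i ∧ i ≤ P.N ∧ x ∈ Set.Icc (P.c (i - 1)) (P.c i) ∧ P.fe i x ∈ A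

/-- `F_i(A) = closure (f (A ∩ X_i))`. -/
def Fmap (i : ℕ) (A : Set ℝ) : Set ℝ := closure (P.f '' (A ∩ P.piece i))

/-- For a word `w = [i_1, …, i_n]`, the set `F_{i_n} ∘ … ∘ F_{i_1} (X)`. -/
def atomOf (w : List ℕ) : Set ℝ := w.foldl (fun S i => P.Fmap i S) P.X

/-- `A` is an atom of generation `n`. -/
def IsAtomGen (n : ℕ) (A : Set ℝ) : Prop :=
  ∃ w : List ℕ, w.length = n ∧ (∀ i ∈ w, 1 ≤ i ∧ i ≤ P.N) ∧
    A = P.atomOf w ∧ A.Nonempty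

/-- `Lam n` is `Λ_{n+1}` of the paper: `Λ_1 = closure (f(X \ Δ))`,
`Λ_{n+1} = closure (f(Λ_n \ Δ))`. -/
def Lam (P : PCIM) : ℕ → Set ℝ
  | 0 => closure (P.f '' (P.X \ P.Δ))
  | n + 1 => closure (P.f '' (P.Lam n \ P.Δ))

/-- The attractor `Λ = ⋂_{n ≥ 1} Λ_n`. -/
def attractor : Set ℝ := ⋂ n : ℕ, P.Lam n

/-- `c i ∈ Δ_lr(x)`: the boundary point `c i` is left-right recurrently visited by the
orbit of `x`. -/
def lrVisited (x : ℝ) (i : ℕ) : Prop :=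
  1 ≤ i ∧ i < P.N ∧
  ∃ l r : ℕ → ℕ, StrictMono l ∧ StrictMono r ∧
    (∀ j, P.f^[l j] x ∈ P.piece i) ∧ (∀ j, P.f^[r j] x ∈ P.piece (i + 1)) ∧
    Filter.Tendsto (fun j => P.f^[l j] x) Filter.atTop (nhds (P.c i)) ∧
    Filter.Tendsto (fun j => P.f^[r j] x) Filter.atTop (nhds (P.c i))

/-- `c i ∈ Δ_lr`: `c i` is left-right recurrently visited by the orbit of some point
of `X̃`. -/
def inΔlr (i : ℕ) : Prop := ∃ x ∈ P.Xt, P.lrVisited x i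

/-- The set `Δ_lr ⊆ Δ`. -/
def ΔlrSet : Set ℝ := {y | ∃ i, P.inΔlr i ∧ y = P.c i}

/-- The relation `∼⁺` on `Δ_lr`: `c_i ∼⁺ c_j` iff `c_i = c_j` or
(`c_i ∈ Δ_lr(d_j^+)` and `c_j ∈ Δ_lr(d_i^+)`). -/
def simP (a b : ℝ) : Prop :=
  a = b ∨ ∃ i j, P.inΔlr i ∧ P.inΔlr j ∧ a = P.c i ∧ b = P.c j ∧
    P.lrVisited (P.dplus j) i ∧ P.lrVisited (P.dplus i) j

/-- The relation `≼⁺` (on representatives): `[c_i] ≼⁺ [c_j]` iff `[c_i] = [c_j]` or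
`c_i ∈ Δ_lr(d_j^+)`. -/
def preP (a b : ℝ) : Prop :=
  P.simP a b ∨ ∃ i j, P.inΔlr i ∧ P.inΔlr j ∧ a = P.c i ∧ b = P.c j ∧
    P.lrVisited (P.dplus j) i

/-- `[c i]` is a minimal class for the partial order `≼⁺`. -/
def MinimalClass (i : ℕ) : Prop :=
  P.inΔlr i ∧ ∀ j, P.inΔlr j → P.preP (P.c j) (P.c i) → P.simP (P.c j) (P.c i)

/-- `f` is injective on each contraction piece. -/
def InjPieces : Prop := ∀ i, 1 ≤ i → i ≤ P.N → Set.InjOn P.f (P.piece i)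

/-- `f` is (strictly) increasing on each contraction piece. -/
def IncrPieces : Prop := ∀ i, 1 ≤ i → i ≤ P.N → StrictMonoOn P.f (P.piece i)

/-- `x` is a periodic point of `f`. -/
def IsPeriodic (x : ℝ) : Prop := ∃ p : ℕ, 1 ≤ p ∧ P.f^[p] x = x

/-- `η` is the itinerary of `x`: `f^[n] x ∈ X_{η n}` for all `n`. -/
def IsItinerary (x : ℝ) (η : ℕ → ℕ) : Prop :=
  ∀ n, 1 ≤ η n ∧ η n ≤ P.N ∧ P.f^[n] x ∈ P.piece (η n)

end PCIM

/-- The word of length `n` of the sequence `η` starting at position `t`. -/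
def wordAt (η : ℕ → ℕ) (t n : ℕ) : List ℕ := (List.range n).map fun m => η (t + m)

/-- The complexity function of the sequence `η`: the number of distinct words of
length `n` occurring in `η`. -/
noncomputable def complexity (η : ℕ → ℕ) (n : ℕ) : ℕ := Set.ncard {w : List ℕ | ∃ t, w = wordAt η t n}

/-! Along the left visits `f^[l j] x → c_i`, the next iterates `f^[l j + 1] x` tend to the
left limit `d_i^-` of `f` at `c_i` (the value there of the Lipschitz extension `fe i`), and
likewise on the right towards `d_i^+`. As `D ⊆ X̃`, the orbits of `d_i^±` avoid `Δ`, where `f`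
is continuous on `X`; shifting the subsequences then puts these whole orbits in `ω(x)`, which
is closed, being the set of cluster points of the orbit of `x`. -/

namespace PCIM

variable (P : PCIM)

lemma c_lt_c {i j : ℕ} (hij : i < j) (hj : j ≤ P.N) : P.c i < P.c j :=
  P.hc (mem_Iic.2 (by omega)) (mem_Iic.2 hj) hij

lemma mem_piece_iff {i : ℕ} {y : ℝ} :
    y ∈ P.piece i ↔
      y ∈ Ioo (P.c (i - 1)) (P.c i) ∨ (i = 1 ∧ y = P.c 0) ∨ (i = P.N ∧ y = P.c P.N) := by
  unfold piece
  split_ifs <;> simp only [mem_union, mem_singleton_iff, mem_empty_iff_false] <;> tauto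

lemma piece_subset_Icc {i : ℕ} (hi₁ : 1 ≤ i) (hiN : i ≤ P.N) :
    P.piece i ⊆ Icc (P.c (i - 1)) (P.c i) := by
  intro y hy
  rcases P.mem_piece_iff.1 hy with hy | ⟨rfl, rfl⟩ | ⟨rfl, rfl⟩
  · exact Ioo_subset_Icc_self hy
  · exact left_mem_Icc.2 (P.c_lt_c zero_lt_one hiN).le
  · exact right_mem_Icc.2 (P.c_lt_c (by omega) le_rfl).le

lemma f_eq_fe_of_mem_piece {i : ℕ} (hi₁ : 1 ≤ i) (hiN : i ≤ P.N) {y : ℝ}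
    (hy : y ∈ P.piece i) : P.f y = P.fe i y := by
  rcases P.mem_piece_iff.1 hy with hy | ⟨rfl, rfl⟩ | ⟨rfl, rfl⟩
  · exact (P.hfe_eq i hi₁ hiN y hy).symm
  · exact P.hfe_left.symm
  · exact P.hfe_right.symm

lemma continuousOn_fe {i : ℕ} (hi₁ : 1 ≤ i) (hiN : i ≤ P.N) :
    ContinuousOn (P.fe i) (Icc (P.c (i - 1)) (P.c i)) :=
  LipschitzOnWith.continuousOn <|
    LipschitzOnWith.of_dist_le' (K := P.lam) fun x hx y hy => by
      simpa only [Real.dist_eq] using P.hfe_lip i hi₁ hiN x hx y hy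

lemma tendsto_f_comp_of_mem_piece {α : Type*} {l : Filter α} {u : α → ℝ} {i : ℕ}
    (hi₁ : 1 ≤ i) (hiN : i ≤ P.N) {y : ℝ} (hy : y ∈ Icc (P.c (i - 1)) (P.c i))
    (hu : ∀ᶠ n in l, u n ∈ P.piece i) (hlim : Tendsto u l (𝓝 y)) :
    Tendsto (P.f ∘ u) l (𝓝 (P.fe i y)) := by
  have hlim' : Tendsto u l (𝓝[Icc (P.c (i - 1)) (P.c i)] y) :=
    tendsto_nhdsWithin_iff.2 ⟨hlim, hu.mono fun n hn => P.piece_subset_Icc hi₁ hiN hn⟩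
  refine ((P.continuousOn_fe hi₁ hiN y hy).tendsto.comp hlim').congr' ?_
  filter_upwards [hu] with n hn
  exact (P.f_eq_fe_of_mem_piece hi₁ hiN hn).symm

lemma tendsto_f_comp_dminus {α : Type*} {l : Filter α} {u : α → ℝ} {i : ℕ}
    (hi₁ : 1 ≤ i) (hiN : i ≤ P.N) (hu : ∀ᶠ n in l, u n ∈ P.piece i)
    (hlim : Tendsto u l (𝓝 (P.c i))) : Tendsto (P.f ∘ u) l (𝓝 (P.dminus i)) :=
  P.tendsto_f_comp_of_mem_piece hi₁ hiN
    (right_mem_Icc.2 (P.c_lt_c (by omega) hiN).le) hu hlim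

lemma tendsto_f_comp_dplus {α : Type*} {l : Filter α} {u : α → ℝ} {i : ℕ}
    (hiN : i < P.N) (hu : ∀ᶠ n in l, u n ∈ P.piece (i + 1))
    (hlim : Tendsto u l (𝓝 (P.c i))) : Tendsto (P.f ∘ u) l (𝓝 (P.dplus i)) :=
  P.tendsto_f_comp_of_mem_piece (by omega) hiN
    (left_mem_Icc.2 (P.c_lt_c (by omega) hiN).le) hu hlim

lemma exists_mem_piece {y : ℝ} (hy : y ∈ P.X \ P.Δ) :
    ∃ i, 1 ≤ i ∧ i ≤ P.N ∧ y ∈ P.piece i := by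
  obtain ⟨⟨hy₀, hyN⟩, hyΔ⟩ := hy
  have hN := P.hN
  rcases hy₀.eq_or_lt with hy₀ | hy₀
  · exact ⟨1, le_rfl, by omega, P.mem_piece_iff.2 (Or.inr (Or.inl ⟨rfl, hy₀.symm⟩))⟩
  classical
  have hex : ∃ k, k ≤ P.N ∧ y ≤ P.c k := ⟨P.N, le_rfl, hyN⟩
  set k := Nat.find hex
  obtain ⟨hkN, hyk⟩ : k ≤ P.N ∧ y ≤ P.c k := Nat.find_spec hex
  have hk₁ : 1 ≤ k := Nat.one_le_iff_ne_zero.2 fun hk => hy₀.not_ge (hk ▸ hyk)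
  have hyk' : P.c (k - 1) < y :=
    not_le.1 fun h => Nat.find_min hex (Nat.sub_one_lt_of_le hk₁ le_rfl) ⟨by omega, h⟩
  refine ⟨k, hk₁, hkN, P.mem_piece_iff.2 ?_⟩
  rcases hyk.lt_or_eq with hyk | hyk
  · exact Or.inl ⟨hyk', hyk⟩
  · have hkN : k = P.N := by_contra fun hk => hyΔ ⟨k, hk₁, by omega, hyk⟩
    exact Or.inr (Or.inr ⟨hkN, hkN ▸ hyk⟩)

lemma piece_mem_nhdsWithin {i : ℕ} {y : ℝ} (hiN : i ≤ P.N) (hy : y ∈ P.piece i) :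
    P.piece i ∈ 𝓝[P.X] y := by
  have hN := P.hN
  rcases P.mem_piece_iff.1 hy with hy | ⟨rfl, rfl⟩ | ⟨rfl, rfl⟩
  · exact mem_nhdsWithin_of_mem_nhds <|
      mem_of_superset (isOpen_Ioo.mem_nhds hy) fun z hz => P.mem_piece_iff.2 (Or.inl hz)
  · filter_upwards [self_mem_nhdsWithin,
      mem_nhdsWithin_of_mem_nhds (Iio_mem_nhds (P.c_lt_c zero_lt_one hiN))] with z hzX hz1
    rcases hzX.1.eq_or_lt with rfl | hz0
    · exact hy
    · exact P.mem_piece_iff.2 (Or.inl ⟨hz0, hz1⟩)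
  · filter_upwards [self_mem_nhdsWithin,
      mem_nhdsWithin_of_mem_nhds (Ioi_mem_nhds (P.c_lt_c (i := P.N - 1) (by omega) le_rfl))]
      with z hzX hzN
    rcases hzX.2.eq_or_lt with rfl | hzN'
    · exact hy
    · exact P.mem_piece_iff.2 (Or.inl ⟨hzN, hzN'⟩)

lemma continuousWithinAt_f {y : ℝ} (hy : y ∈ P.X \ P.Δ) : ContinuousWithinAt P.f P.X y := by
  obtain ⟨i, hi₁, hiN, hyi⟩ := P.exists_mem_piece hy
  rw [ContinuousWithinAt, P.f_eq_fe_of_mem_piece hi₁ hiN hyi]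
  exact P.tendsto_f_comp_of_mem_piece hi₁ hiN (P.piece_subset_Icc hi₁ hiN hyi)
    (P.piece_mem_nhdsWithin hiN hyi) (tendsto_id.mono_left nhdsWithin_le_nhds)

lemma omega_eq_setOf_mapClusterPt (x : ℝ) :
    P.omega x = {y | MapClusterPt y atTop fun n => P.f^[n] x} := by
  ext y
  refine ⟨fun ⟨φ, hφ, hlim⟩ => .of_comp hφ.tendsto_atTop hlim.mapClusterPt, fun hy => ?_⟩
  obtain ⟨φ, hφ, hlim⟩ := hy.tendsto_subseq
  exact ⟨φ, hφ, hlim⟩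

lemma isClosed_omega (x : ℝ) : IsClosed (P.omega x) :=
  P.omega_eq_setOf_mapClusterPt x ▸ isClosed_setOfPred_clusterPt

lemma closure_orbit_subset_omega {x d : ℝ} (hx : x ∈ P.X) (hd : d ∈ P.Xt) {φ : ℕ → ℕ}
    (hφ : StrictMono φ) (hlim : Tendsto (fun j => P.f^[φ j] x) atTop (𝓝 d)) :
    closure (P.orbit d) ⊆ P.omega x := by
  have hshift : ∀ n, Tendsto (fun j => P.f^[φ j + n] x) atTop (𝓝 (P.f^[n] d)) := by
    intro n
    induction n with
    | zero => exact hlim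
    | succ n ih =>
      have hX : Tendsto (fun j => P.f^[φ j + n] x) atTop (𝓝[P.X] (P.f^[n] d)) :=
        tendsto_nhdsWithin_iff.2 ⟨ih, Eventually.of_forall fun j => P.hmap.iterate _ hx⟩
      simpa only [← add_assoc, Function.iterate_succ_apply', Function.comp_def] using
        (P.continuousWithinAt_f (hd n)).tendsto.comp hX
  rw [(P.isClosed_omega x).closure_subset_iff]
  rintro _ ⟨n, rfl⟩
  exact ⟨fun j => φ j + n, hφ.add_const n, hshift n⟩

end PCIM

/-- If `D ⊆ X̃`, `x ∈ X̃` and `c i ∈ Δ_lr(x)`, then `c i`, `d_i^+`, `d_i^-` belong to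
`ω(x)`, and the closures of the orbits of `d_i^-` and `d_i^+` are contained in `ω(x)`. -/
theorem stmt8 (P : PCIM) (hD : P.D ⊆ P.Xt) (x : ℝ) (hx : x ∈ P.Xt)
    (i : ℕ) (hi : P.lrVisited x i) :
    P.c i ∈ P.omega x ∧ P.dplus i ∈ P.omega x ∧ P.dminus i ∈ P.omega x ∧
      closure (P.orbit (P.dminus i)) ∪ closure (P.orbit (P.dplus i)) ⊆ P.omega x := by
  obtain ⟨hi₁, hiN, l, r, hl, hr, hl_mem, hr_mem, hl_lim, hr_lim⟩ := hi
  have hx₀ : x ∈ P.X := (hx 0).1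
  have h_succ (φ : ℕ → ℕ) : (fun j => P.f^[φ j + 1] x) = P.f ∘ fun j => P.f^[φ j] x :=
    funext fun j => Function.iterate_succ_apply' _ _ _
  have hminus : closure (P.orbit (P.dminus i)) ⊆ P.omega x :=
    P.closure_orbit_subset_omega hx₀ (hD (Or.inl (Or.inl ⟨i, hi₁, hiN, rfl⟩)))
      (hl.add_const 1) (h_succ l ▸
        P.tendsto_f_comp_dminus hi₁ hiN.le (Eventually.of_forall hl_mem) hl_lim)
  have hplus : closure (P.orbit (P.dplus i)) ⊆ P.omega x :=
    P.closure_orbit_subset_omega hx₀ (hD (Or.inl (Or.inr ⟨i, hi₁, hiN, rfl⟩)))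
      (hr.add_const 1) (h_succ r ▸
        P.tendsto_f_comp_dplus hiN (Eventually.of_forall hr_mem) hr_lim)
  have mem_closure_orbit (d : ℝ) : d ∈ closure (P.orbit d) := subset_closure ⟨0, rfl⟩
  exact ⟨⟨l, hl, hl_lim⟩, hplus (mem_closure_orbit _), hminus (mem_closure_orbit _),
    union_subset hminus hplus⟩
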